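/- arXiv:1601.04397 — 7 statements merged into one kernel-verified Lean document; each statement's English description precedes it below -/
import Mathlib

section
/- Let (Ω, μ) be a probability space, p ≥ 1, and let Y_1, …, Y_p be real random variables each in L²(μ). Set Ȳ = p⁻¹ Σ_{l=1}^p Y_l. Then max_{i,j} |Cov(Y_i, Y_j) − Cov(Y_i − Ȳ, Y_j − Ȳ)| ≤ 3 p⁻¹ max_i Σ_{j=1}^p |Cov(Y_i, Y_j)|. -/
/-!
Covariance is bilinear, so centering by the average `Ȳ = p⁻¹ ∑ Y_l` changes `Cov(Y_i, Y_j)` by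
`p⁻¹ ∑_l c_il + p⁻¹ ∑_l c_lj - p⁻² ∑_{k,l} c_kl`, where `c = Ω₀`. As `c` is symmetric, the row
and the column sum are at most `‖c‖₁ = max_k ∑_l |c_kl|` in absolute value, and the total sum is
at most `p ‖c‖₁`.
-/

open MeasureTheory

/-- Covariance of two square-integrable real random variables. -/
noncomputable def cov {Ω : Type*} [MeasurableSpace Ω] (μ : Measure Ω) (U V : Ω → ℝ) : ℝ :=
  ∫ ω, (U ω - ∫ x, U x ∂μ) * (V ω - ∫ x, V x ∂μ) ∂μ

open ProbabilityTheory

lemma cov_eq_covariance {Ω : Type*} [MeasurableSpace Ω] (μ : Measure Ω) (U V : Ω → ℝ) :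
    cov μ U V = cov[U, V; μ] :=
  rfl

namespace ProbabilityTheory

lemma covariance_sub_sum_div_sub_sum_div {Ω ι : Type*} [MeasurableSpace Ω] {μ : Measure Ω}
    [IsFiniteMeasure μ] [Fintype ι] {Y : ι → Ω → ℝ} (hY : ∀ i, MemLp (Y i) 2 μ) (d : ℝ)
    (i j : ι) :
    cov[fun ω ↦ Y i ω - (∑ l, Y l ω) / d, fun ω ↦ Y j ω - (∑ l, Y l ω) / d; μ] =
      cov[Y i, Y j; μ] - (∑ l, cov[Y i, Y l; μ]) / d - (∑ l, cov[Y l, Y j; μ]) / d +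
        (∑ k, ∑ l, cov[Y k, Y l; μ]) / d ^ 2 := by
  have hS : MemLp (fun ω ↦ (∑ l, Y l ω) / d) 2 μ := by
    simpa only [div_eq_mul_inv] using (memLp_finsetSum _ fun l _ ↦ hY l).mul_const d⁻¹
  rw [covariance_fun_sub_fun_sub (hY i) hS (hY j) hS, covariance_fun_div_right,
    covariance_fun_sum_right hY (hY i), covariance_fun_div_left, covariance_fun_sum_left hY (hY j),
    covariance_fun_div_left, covariance_fun_div_right, covariance_fun_sum_fun_sum hY hY]
  ring

end ProbabilityTheory

section RowSums

variable {ι : Type*} [Fintype ι] {c : ι → ι → ℝ} {M : ℝ}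

lemma abs_sum_le_of_forall_sum_abs_le (hM : ∀ k, ∑ l, |c k l| ≤ M) (k : ι) :
    |∑ l, c k l| ≤ M :=
  (Finset.abs_sum_le_sum_abs _ _).trans (hM k)

lemma abs_sum_sum_le_card_mul_of_forall_sum_abs_le (hM : ∀ k, ∑ l, |c k l| ≤ M) :
    |∑ k, ∑ l, c k l| ≤ Fintype.card ι * M :=
  calc |∑ k, ∑ l, c k l| ≤ ∑ k, |∑ l, c k l| := Finset.abs_sum_le_sum_abs _ _
    _ ≤ ∑ _k : ι, M := Finset.sum_le_sum fun k _ ↦ abs_sum_le_of_forall_sum_abs_le hM k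
    _ = Fintype.card ι * M := by simp

lemma abs_sum_div_card_add_sum_div_card_sub_sum_sum_div_card_sq_le [Nonempty ι]
    (hc : ∀ k l, c k l = c l k) (hM : ∀ k, ∑ l, |c k l| ≤ M) (i j : ι) :
    |(∑ l, c i l) / Fintype.card ι + (∑ l, c l j) / Fintype.card ι -
        (∑ k, ∑ l, c k l) / (Fintype.card ι : ℝ) ^ 2| ≤ 3 / Fintype.card ι * M := by
  set n : ℝ := (Fintype.card ι : ℝ)
  have hn : 0 < n := Nat.cast_pos.mpr Fintype.card_pos
  have hrow := abs_sum_le_of_forall_sum_abs_le hM i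
  have hcol : |∑ l, c l j| ≤ M := by
    simpa only [hc _ j] using abs_sum_le_of_forall_sum_abs_le hM j
  have htot := abs_sum_sum_le_card_mul_of_forall_sum_abs_le hM
  calc _ ≤ |(∑ l, c i l) / n| + |(∑ l, c l j) / n| + |(∑ k, ∑ l, c k l) / n ^ 2| :=
        (abs_sub _ _).trans (add_le_add (abs_add_le _ _) le_rfl)
    _ = |∑ l, c i l| / n + |∑ l, c l j| / n + |∑ k, ∑ l, c k l| / n / n := by
        simp only [abs_div, sq, abs_mul, abs_of_pos hn, div_div]
    _ ≤ M / n + M / n + n * M / n / n := by gcongr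
    _ = 3 / n * M := by field_simp; ring

end RowSums

/-- Proposition 1: `‖Ω₀ − Γ₀‖_max ≤ 3 p⁻¹ ‖Ω₀‖₁`, where `Ω₀` is the covariance matrix
of `(Y_1, …, Y_p)` and `Γ₀` is the covariance matrix of the centered variables `Y_i − Ȳ`. -/
theorem basis_clr_cov_max_bound {Ω : Type*} [MeasurableSpace Ω] (μ : Measure Ω)
    [IsProbabilityMeasure μ] (p : ℕ) (hp : 0 < p) (Y : Fin p → Ω → ℝ)
    (hY : ∀ i, MemLp (Y i) 2 μ) (i j : Fin p) :
    |cov μ (Y i) (Y j) -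
        cov μ (fun ω => Y i ω - (∑ l, Y l ω) / p) (fun ω => Y j ω - (∑ l, Y l ω) / p)| ≤
      3 / p * (Finset.univ.sup' (Finset.univ_nonempty_iff.mpr ⟨⟨0, hp⟩⟩)
        fun i' => ∑ j', |cov μ (Y i') (Y j')|) := by
  have : Nonempty (Fin p) := ⟨⟨0, hp⟩⟩
  have hrow (k : Fin p) : ∑ l, |cov μ (Y k) (Y l)| ≤ Finset.univ.sup'
      (Finset.univ_nonempty_iff.mpr ⟨⟨0, hp⟩⟩) fun i' ↦ ∑ j', |cov μ (Y i') (Y j')| :=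
    Finset.le_sup' (fun i' ↦ ∑ j', |cov μ (Y i') (Y j')|) (Finset.mem_univ k)
  have hbound := abs_sum_div_card_add_sum_div_card_sub_sum_sum_div_card_sq_le
    (fun k l ↦ covariance_comm (Y k) (Y l)) hrow i j
  simp only [Fintype.card_fin, cov_eq_covariance] at hbound ⊢
  rw [covariance_sub_sum_div_sub_sum_div hY]
  convert hbound using 2
  ring
end

section
/- Let p ≥ 5 and let α = (α_1, …, α_p) ∈ ℝ^p with α ≠ 0. Then the matrix A = α1ᵀ + 1αᵀ, whose (i,j) entry is α_i + α_j, has at least p − 1 nonzero strictly upper-triangular entries; that is, the cardinality of {(i,j) : 1 ≤ i < j ≤ p, α_i + α_j ≠ 0} is at least p − 1. -/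
private lemma rank_two_sq_ge (n : ℕ) : n ≤ n * n := by
  rcases Nat.eq_zero_or_pos n with rfl | h
  · simp
  · exact Nat.le_mul_of_pos_left n h

private lemma rank_two_aux (p : ℕ) (hp : 5 ≤ p) (a b r : ℕ) (hsum : a + b + r = p)
    (ha : 1 ≤ a) :
    2 * (p - 1) ≤ a * (a - 1) + b * (b - 1) + a * r + r * a + b * r + r * b := by
  obtain ⟨a', rfl⟩ : ∃ a', a = a' + 1 := ⟨a - 1, by omega⟩
  have hp1 : p - 1 = a' + b + r := by omega
  rw [hp1]
  simp only [Nat.add_sub_cancel]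
  have h5 : 5 ≤ a' + 1 + b + r := by omega
  rcases Nat.eq_zero_or_pos r with rfl | hr
  · rcases Nat.eq_zero_or_pos b with rfl | hb
    · have h4 : 4 ≤ a' := by omega
      have f1 : 2 * a' ≤ (a' + 1) * a' := Nat.mul_le_mul_right a' (by omega)
      simp only [Nat.mul_zero, Nat.zero_mul, Nat.add_zero]
      linarith
    · obtain ⟨b', rfl⟩ : ∃ b', b = b' + 1 := ⟨b - 1, by omega⟩
      simp only [Nat.add_sub_cancel, Nat.mul_zero, Nat.zero_mul, Nat.add_zero]
      rcases le_or_gt 2 a' with h | h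
      · have f1 : 2 * a' ≤ a' * a' := Nat.mul_le_mul_right a' h
        nlinarith [rank_two_sq_ge b']
      · have hb2 : 2 ≤ b' := by omega
        have f2 : 2 * b' ≤ b' * b' := Nat.mul_le_mul_right b' hb2
        nlinarith [rank_two_sq_ge a']
  · obtain ⟨r', rfl⟩ : ∃ r', r = r' + 1 := ⟨r - 1, by omega⟩
    have f3 : 2 * (a' + r') + 2 ≤ (a' + 1) * (r' + 1) + (r' + 1) * (a' + 1) := by nlinarith
    have f4 : 2 * b ≤ b * (r' + 1) + (r' + 1) * b := by nlinarith
    have f5 : 0 ≤ (a' + 1) * a' := Nat.zero_le _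
    have f6 : 0 ≤ b * (b - 1) := Nat.zero_le _
    linarith


/-- Key combinatorial claim in the proof of Proposition 2: for `p ≥ 5` and `α ≠ 0`,
the matrix `α1ᵀ + 1αᵀ` has at least `p − 1` nonzero strictly upper-triangular entries. -/
theorem rank_two_nonzero_upper_entries (p : ℕ) (hp : 5 ≤ p) (α : Fin p → ℝ)
    (hα : α ≠ 0) :
    p - 1 ≤ {ij : Fin p × Fin p | ij.1 < ij.2 ∧ α ij.1 + α ij.2 ≠ 0}.ncard := by
  classical
  obtain ⟨c, hc⟩ : ∃ c, α c ≠ 0 := by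
    by_contra h
    push_neg at h
    exact hα (funext h)
  set t := α c with ht
  set A : Finset (Fin p) := Finset.univ.filter (fun i => α i = t) with hA
  set B : Finset (Fin p) := Finset.univ.filter (fun i => α i = -t) with hB
  set R : Finset (Fin p) := Finset.univ.filter (fun i => α i ≠ t ∧ α i ≠ -t) with hR
  have hmemA : ∀ i, i ∈ A ↔ α i = t := by intro i; simp [hA]
  have hmemB : ∀ i, i ∈ B ↔ α i = -t := by intro i; simp [hB]
  have hmemR : ∀ i, i ∈ R ↔ α i ≠ t ∧ α i ≠ -t := by intro i; simp [hR]
  have hAB : Disjoint A B := by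
    rw [Finset.disjoint_left]
    intro i hiA hiB
    rw [hmemA] at hiA; rw [hmemB] at hiB
    apply hc
    have : t = -t := hiA ▸ hiB
    linarith [this]
  have hAR : Disjoint A R := by
    rw [Finset.disjoint_left]
    intro i hiA hiR
    rw [hmemA] at hiA; rw [hmemR] at hiR
    exact hiR.1 hiA
  have hBR : Disjoint B R := by
    rw [Finset.disjoint_left]
    intro i hiB hiR
    rw [hmemB] at hiB; rw [hmemR] at hiR
    exact hiR.2 hiB
  have hcover : A ∪ B ∪ R = Finset.univ := by
    ext i
    simp only [Finset.mem_union, Finset.mem_univ, iff_true]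
    by_cases h1 : α i = t
    · exact Or.inl (Or.inl ((hmemA i).2 h1))
    · by_cases h2 : α i = -t
      · exact Or.inl (Or.inr ((hmemB i).2 h2))
      · exact Or.inr ((hmemR i).2 ⟨h1, h2⟩)
  have hcard : A.card + B.card + R.card = p := by
    have h1 : (A ∪ B ∪ R).card = p := by rw [hcover]; simp
    rw [Finset.card_union_of_disjoint (by
      rw [Finset.disjoint_union_left]; exact ⟨hAR, hBR⟩),
      Finset.card_union_of_disjoint hAB] at h1
    exact h1
  have hcA : 1 ≤ A.card := Finset.card_pos.2 ⟨c, (hmemA c).2 rfl⟩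
  set S : Finset (Fin p × Fin p) :=
    Finset.univ.filter (fun ij => ij.1 < ij.2 ∧ α ij.1 + α ij.2 ≠ 0) with hS
  have hset : {ij : Fin p × Fin p | ij.1 < ij.2 ∧ α ij.1 + α ij.2 ≠ 0} = ↑S := by
    ext ij; simp [hS]
  rw [hset, Set.ncard_coe_finset]
  set Sord : Finset (Fin p × Fin p) :=
    Finset.univ.filter (fun ij => ij.1 ≠ ij.2 ∧ α ij.1 + α ij.2 ≠ 0) with hSord
  have hmemS : ∀ ij : Fin p × Fin p, ij ∈ S ↔ ij.1 < ij.2 ∧ α ij.1 + α ij.2 ≠ 0 := by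
    intro ij; simp [hS]
  have hmemSord : ∀ ij : Fin p × Fin p, ij ∈ Sord ↔ ij.1 ≠ ij.2 ∧ α ij.1 + α ij.2 ≠ 0 := by
    intro ij; simp [hSord]
  have hswap : Sord = S ∪ S.image Prod.swap := by
    ext ij
    rw [Finset.mem_union, hmemSord, hmemS]
    constructor
    · rintro ⟨hne, hsum⟩
      rcases lt_or_gt_of_ne hne with hlt | hgt
      · exact Or.inl ⟨hlt, hsum⟩
      · refine Or.inr (Finset.mem_image.2 ⟨ij.swap, ?_, ?_⟩)
        · rw [hmemS]
          exact ⟨hgt, by rw [add_comm] at hsum; exact hsum⟩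
        · exact Prod.swap_swap ij
    · rintro (⟨hlt, hsum⟩ | h)
      · exact ⟨ne_of_lt hlt, hsum⟩
      · obtain ⟨kl, hkl, hkl2⟩ := Finset.mem_image.1 h
        rw [hmemS] at hkl
        subst hkl2
        exact ⟨(ne_of_lt hkl.1).symm, by rw [add_comm] at hkl; exact hkl.2⟩
  have hcardSord : Sord.card = 2 * S.card := by
    rw [hswap, Finset.card_union_of_disjoint, Finset.card_image_of_injective _ Prod.swap_injective]
    · ring
    · rw [Finset.disjoint_left]
      intro ij hij hij'
      rw [hmemS] at hij
      obtain ⟨kl, hkl, hkl2⟩ := Finset.mem_image.1 hij'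
      rw [hmemS] at hkl
      subst hkl2
      exact absurd hij.1 (not_lt.2 (le_of_lt hkl.1))
  -- the big union of nonzero ordered pairs
  have ht2 : t ≠ 0 := hc
  set U : Finset (Fin p × Fin p) :=
    A.offDiag ∪ B.offDiag ∪ A ×ˢ R ∪ R ×ˢ A ∪ B ×ˢ R ∪ R ×ˢ B with hU
  have hUsub : U ⊆ Sord := by
    intro ij hij
    rw [hmemSord]
    simp only [hU, Finset.mem_union, Finset.mem_offDiag, Finset.mem_product] at hij
    rcases hij with ((((⟨h1, h2, h3⟩ | ⟨h1, h2, h3⟩) | ⟨h1, h2⟩) | ⟨h1, h2⟩) | ⟨h1, h2⟩) | ⟨h1, h2⟩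
    · rw [hmemA] at h1 h2
      refine ⟨h3, ?_⟩
      rw [h1, h2]; intro h; apply ht2; linarith
    · rw [hmemB] at h1 h2
      refine ⟨h3, ?_⟩
      rw [h1, h2]; intro h; apply ht2; linarith
    · rw [hmemA] at h1; rw [hmemR] at h2
      refine ⟨?_, ?_⟩
      · intro h; rw [h] at h1; exact h2.1 h1
      · rw [h1]; intro h; apply h2.2; linarith
    · rw [hmemA] at h2; rw [hmemR] at h1
      refine ⟨?_, ?_⟩
      · intro h; rw [h] at h1; exact h1.1 h2
      · rw [h2]; intro h; apply h1.2; linarith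
    · rw [hmemB] at h1; rw [hmemR] at h2
      refine ⟨?_, ?_⟩
      · intro h; rw [h] at h1; exact h2.2 h1
      · rw [h1]; intro h; apply h2.1; linarith
    · rw [hmemB] at h2; rw [hmemR] at h1
      refine ⟨?_, ?_⟩
      · intro h; rw [h] at h1; exact h1.2 h2
      · rw [h2]; intro h; apply h1.1; linarith
  -- cardinality of U
  have prod_disj : ∀ {s₁ t₁ s₂ t₂ : Finset (Fin p)},
      (Disjoint s₁ s₂ ∨ Disjoint t₁ t₂) → Disjoint (s₁ ×ˢ t₁) (s₂ ×ˢ t₂) := by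
    intro s₁ t₁ s₂ t₂ h
    rw [Finset.disjoint_left]
    intro ij hij hij'
    rw [Finset.mem_product] at hij hij'
    rcases h with h | h
    · exact Finset.disjoint_left.1 h hij.1 hij'.1
    · exact Finset.disjoint_left.1 h hij.2 hij'.2
  have hAoff : A.offDiag ⊆ A ×ˢ A := by
    intro ij hij; rw [Finset.mem_offDiag] at hij; rw [Finset.mem_product]
    exact ⟨hij.1, hij.2.1⟩
  have hBoff : B.offDiag ⊆ B ×ˢ B := by
    intro ij hij; rw [Finset.mem_offDiag] at hij; rw [Finset.mem_product]
    exact ⟨hij.1, hij.2.1⟩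
  have hUcard : U.card = A.card * (A.card - 1) + B.card * (B.card - 1)
      + A.card * R.card + R.card * A.card + B.card * R.card + R.card * B.card := by
    rw [hU]
    rw [Finset.card_union_of_disjoint (Finset.disjoint_of_subset_left
      (Finset.union_subset_union (Finset.union_subset_union (Finset.union_subset_union
        (Finset.union_subset_union hAoff hBoff) (le_refl _)) (le_refl _)) (le_refl _))
      (by
        rw [Finset.disjoint_union_left, Finset.disjoint_union_left,
          Finset.disjoint_union_left, Finset.disjoint_union_left]
        exact ⟨⟨⟨⟨prod_disj (Or.inl hAR), prod_disj (Or.inl hBR)⟩,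
          prod_disj (Or.inl hAR)⟩, prod_disj (Or.inr hAB)⟩,
          prod_disj (Or.inl hBR)⟩))]
    rw [Finset.card_union_of_disjoint (Finset.disjoint_of_subset_left
      (Finset.union_subset_union (Finset.union_subset_union
        (Finset.union_subset_union hAoff hBoff) (le_refl _)) (le_refl _))
      (by
        rw [Finset.disjoint_union_left, Finset.disjoint_union_left,
          Finset.disjoint_union_left]
        exact ⟨⟨⟨prod_disj (Or.inl hAB), prod_disj (Or.inr hBR)⟩,
          prod_disj (Or.inl hAB)⟩, prod_disj (Or.inl hBR.symm)⟩))]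
    rw [Finset.card_union_of_disjoint (Finset.disjoint_of_subset_left
      (Finset.union_subset_union (Finset.union_subset_union hAoff hBoff) (le_refl _))
      (by
        rw [Finset.disjoint_union_left, Finset.disjoint_union_left]
        exact ⟨⟨prod_disj (Or.inl hAR), prod_disj (Or.inl hBR)⟩,
          prod_disj (Or.inl hAR)⟩))]
    rw [Finset.card_union_of_disjoint (Finset.disjoint_of_subset_left
      (Finset.union_subset_union hAoff hBoff)
      (by
        rw [Finset.disjoint_union_left]
        exact ⟨prod_disj (Or.inr hAR), prod_disj (Or.inl hAB.symm)⟩))]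
    rw [Finset.card_union_of_disjoint (Finset.disjoint_of_subset_left hAoff
      (Finset.disjoint_of_subset_right hBoff (prod_disj (Or.inl hAB))))]
    rw [Finset.offDiag_card, Finset.offDiag_card, Finset.card_product, Finset.card_product,
      Finset.card_product, Finset.card_product]
    have e1 : A.card * A.card - A.card = A.card * (A.card - 1) := by
      cases' A.card with n
      · simp
      · simp [Nat.succ_sub_one, Nat.mul_sub, Nat.succ_mul, Nat.mul_succ]
    have e2 : B.card * B.card - B.card = B.card * (B.card - 1) := by
      cases' B.card with n
      · simp
      · simp [Nat.succ_sub_one, Nat.mul_sub, Nat.succ_mul, Nat.mul_succ]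
    rw [e1, e2]
  have key2 : 2 * (p - 1) ≤ U.card := by
    rw [hUcard]
    exact rank_two_aux p hp A.card B.card R.card hcard hcA
  have h2 : 2 * (p - 1) ≤ 2 * S.card := by
    calc 2 * (p - 1) ≤ U.card := key2
    _ ≤ Sord.card := Finset.card_le_card hUsub
    _ = 2 * S.card := hcardSord
  omega
end

section
/- Let p ≥ 5 and let s be a natural number with s < (p − 1)/2. Let Ω₁ and Ω₂ be symmetric p×p real matrices, each having at most s nonzero entries in positions (i,j) with i < j. If T(Ω₁) = T(Ω₂), where T(Ω) = ω1ᵀ + 1ωᵀ − 2Ω and ω ∈ ℝ^p is the diagonal vector of Ω, then Ω₁ = Ω₂. -/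
/-!
Write `d` for the diagonal of `Ω₁ - Ω₂`. Equal variation matrices mean
`2 (Ω₁ - Ω₂)ᵢⱼ = dᵢ + dⱼ`, so every pair `i < j` with `dᵢ + dⱼ ≠ 0` lies in the union of the two
upper supports, which has at most `2s < p - 1` elements. But if `d ≠ 0` there are at least `p - 1`
such pairs: when `d` vanishes somewhere, every pair joining the support of `d` to its complement
counts; otherwise every pair inside `{d > 0}` or inside `{d < 0}` does, and for `p ≥ 5` these
already number at least `p - 1`. Hence `d = 0`, and then `Ω₁ = Ω₂`.
-/

open Set

theorem Set.ncard_offDiag {α : Type*} {s : Set α} (hs : s.Finite := by toFinite_tac) :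
    s.offDiag.ncard = s.ncard * s.ncard - s.ncard := by
  lift s to Finset α using hs
  rw [← Finset.coe_offDiag, ncard_coe_finset, ncard_coe_finset, Finset.offDiag_card]

theorem Nat.two_mul_add_sub_one_le_of_pos {a b : ℕ} (ha : 1 ≤ a) (hb : 1 ≤ b) :
    2 * (a + b - 1) ≤ a * b + b * a := by
  obtain ⟨a, rfl⟩ := Nat.exists_eq_add_of_le' ha
  obtain ⟨b, rfl⟩ := Nat.exists_eq_add_of_le' hb
  rw [show a + 1 + (b + 1) - 1 = a + b + 1 by omega]
  nlinarith

theorem Nat.two_mul_add_sub_one_le_of_five_le {a b : ℕ} (hab : 5 ≤ a + b) :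
    2 * (a + b - 1) ≤ (a * a - a) + (b * b - b) := by
  have key : ∀ x : ℤ, 0 ≤ (x - 1) * (x - 2) := fun x => by
    rcases le_or_gt x 1 with h | h <;> nlinarith
  zify [Nat.le_mul_self a, Nat.le_mul_self b, (by omega : 1 ≤ a + b)]
  rcases le_or_gt 3 a with ha | ha
  · nlinarith [key b]
  · nlinarith [key a]

section

variable {ι : Type*} [Finite ι]

theorem ncard_pairs_ne_eq_two_mul_ncard_pairs_lt [LinearOrder ι] {r : ι → ι → Prop}
    (hr : ∀ i j, r i j → r j i) :
    {x : ι × ι | x.1 ≠ x.2 ∧ r x.1 x.2}.ncard = 2 * {x : ι × ι | x.1 < x.2 ∧ r x.1 x.2}.ncard := by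
  set L := {x : ι × ι | x.1 < x.2 ∧ r x.1 x.2}
  have hsplit : {x : ι × ι | x.1 ≠ x.2 ∧ r x.1 x.2} = L ∪ Prod.swap '' L := by
    ext ⟨i, j⟩
    simp only [mem_ofPred_eq, mem_union, image_swap_eq_preimage_swap, mem_preimage,
      Prod.fst_swap, Prod.snd_swap, L, ne_iff_lt_or_gt, or_and_right]
    exact or_congr Iff.rfl (and_congr Iff.rfl ⟨hr i j, hr j i⟩)
  have hdisj : Disjoint L (Prod.swap '' L) := by
    rw [image_swap_eq_preimage_swap, Set.disjoint_left]
    exact fun x hx hx' => lt_asymm hx.1 hx'.1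
  rw [hsplit, ncard_union_eq hdisj, ncard_image_of_injective _ Prod.swap_injective, two_mul]

theorem two_mul_card_sub_one_le_ncard_of_exists_eq_zero {M : Type*} [AddZeroClass M] {d : ι → M}
    (hd : d ≠ 0) (hzero : ∃ i, d i = 0) :
    2 * (Nat.card ι - 1) ≤ {x : ι × ι | x.1 ≠ x.2 ∧ d x.1 + d x.2 ≠ 0}.ncard := by
  set S := Function.support d
  have hS : 0 < S.ncard := (ncard_pos).mpr (Function.support_nonempty_iff.mpr hd)
  have hSc : 0 < Sᶜ.ncard := by
    obtain ⟨i, hi⟩ := hzero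
    exact (ncard_pos).mpr ⟨i, Function.notMem_support.mpr hi⟩
  have hsub : S ×ˢ Sᶜ ∪ Sᶜ ×ˢ S ⊆ {x : ι × ι | x.1 ≠ x.2 ∧ d x.1 + d x.2 ≠ 0} := by
    rintro ⟨i, j⟩ (⟨hi, hj⟩ | ⟨hi, hj⟩)
    · exact ⟨ne_of_mem_of_not_mem hi hj, by rwa [Function.notMem_support.mp hj, add_zero]⟩
    · exact ⟨(ne_of_mem_of_not_mem hj hi).symm, by rwa [Function.notMem_support.mp hi, zero_add]⟩
  have hdisj : Disjoint (S ×ˢ Sᶜ) (Sᶜ ×ˢ S) :=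
    Set.disjoint_left.mpr fun x hx hx' => hx'.1 hx.1
  rw [← ncard_add_ncard_compl S]
  calc _ ≤ _ := Nat.two_mul_add_sub_one_le_of_pos hS hSc
    _ = (S ×ˢ Sᶜ ∪ Sᶜ ×ˢ S).ncard := by rw [ncard_union_eq hdisj, ncard_prod, ncard_prod]
    _ ≤ _ := ncard_le_ncard hsub

theorem two_mul_card_sub_one_le_ncard_of_forall_ne_zero {G : Type*} [AddCommGroup G]
    [LinearOrder G] [IsOrderedAddMonoid G] {d : ι → G} (hd : ∀ i, d i ≠ 0) (hn : 5 ≤ Nat.card ι) :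
    2 * (Nat.card ι - 1) ≤ {x : ι × ι | x.1 ≠ x.2 ∧ d x.1 + d x.2 ≠ 0}.ncard := by
  set P := {i | 0 < d i}
  have hsub : P.offDiag ∪ Pᶜ.offDiag ⊆ {x : ι × ι | x.1 ≠ x.2 ∧ d x.1 + d x.2 ≠ 0} := by
    rintro ⟨i, j⟩ (⟨hi, hj, hij⟩ | ⟨hi, hj, hij⟩)
    · exact ⟨hij, (add_pos hi hj).ne'⟩
    · exact ⟨hij, (add_neg ((not_lt.mp hi).lt_of_ne (hd i)) ((not_lt.mp hj).lt_of_ne (hd j))).ne⟩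
  have hdisj : Disjoint P.offDiag Pᶜ.offDiag :=
    Set.disjoint_left.mpr fun x hx hx' => hx'.1 hx.1
  rw [← ncard_add_ncard_compl P] at hn ⊢
  calc _ ≤ _ := Nat.two_mul_add_sub_one_le_of_five_le hn
    _ = (P.offDiag ∪ Pᶜ.offDiag).ncard := by
      rw [ncard_union_eq hdisj, ncard_offDiag, ncard_offDiag]
    _ ≤ _ := ncard_le_ncard hsub

theorem card_sub_one_le_ncard_pairs_lt_add_ne_zero [LinearOrder ι] {G : Type*} [AddCommGroup G]
    [LinearOrder G] [IsOrderedAddMonoid G] {d : ι → G} (hd : d ≠ 0) (hn : 5 ≤ Nat.card ι) :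
    Nat.card ι - 1 ≤ {x : ι × ι | x.1 < x.2 ∧ d x.1 + d x.2 ≠ 0}.ncard := by
  suffices 2 * (Nat.card ι - 1) ≤ {x : ι × ι | x.1 ≠ x.2 ∧ d x.1 + d x.2 ≠ 0}.ncard by
    have hsymm := ncard_pairs_ne_eq_two_mul_ncard_pairs_lt (r := fun i j => d i + d j ≠ 0)
      fun i j h => by rwa [add_comm]
    omega
  by_cases hzero : ∃ i, d i = 0
  · exact two_mul_card_sub_one_le_ncard_of_exists_eq_zero hd hzero
  · exact two_mul_card_sub_one_le_ncard_of_forall_ne_zero (not_exists.mp hzero) hn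

end

theorem variation_matrix_identifiability_general (p : ℕ) (hp : 5 ≤ p) (s : ℕ)
    (hs : (s : ℝ) < ((p : ℝ) - 1) / 2)
    (Ω₁ Ω₂ : Matrix (Fin p) (Fin p) ℝ)
    (hs1 : {ij : Fin p × Fin p | ij.1 < ij.2 ∧ Ω₁ ij.1 ij.2 ≠ 0}.ncard ≤ s)
    (hs2 : {ij : Fin p × Fin p | ij.1 < ij.2 ∧ Ω₂ ij.1 ij.2 ≠ 0}.ncard ≤ s)
    (hT : ∀ i j, Ω₁ i i + Ω₁ j j - 2 * Ω₁ i j = Ω₂ i i + Ω₂ j j - 2 * Ω₂ i j) :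
    Ω₁ = Ω₂ := by
  set d : Fin p → ℝ := fun i => Ω₁ i i - Ω₂ i i
  have hdiff : ∀ i j, 2 * (Ω₁ i j - Ω₂ i j) = d i + d j := fun i j => by linarith [hT i j]
  have hd : d = 0 := by
    by_contra hd
    have hsub : {x : Fin p × Fin p | x.1 < x.2 ∧ d x.1 + d x.2 ≠ 0} ⊆
        {ij | ij.1 < ij.2 ∧ Ω₁ ij.1 ij.2 ≠ 0} ∪ {ij | ij.1 < ij.2 ∧ Ω₂ ij.1 ij.2 ≠ 0} := by
      rintro ⟨i, j⟩ ⟨hij, hne⟩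
      by_contra hmem
      simp only [mem_union, mem_ofPred_eq, not_or, not_and, not_not] at hmem
      exact hne (by rw [← hdiff, hmem.1 hij, hmem.2 hij, sub_self, mul_zero])
    have hcount := (card_sub_one_le_ncard_pairs_lt_add_ne_zero hd (by simpa using hp)).trans
      ((ncard_le_ncard hsub).trans (ncard_union_le _ _))
    rw [Nat.card_fin] at hcount
    have : ((p - 1 : ℕ) : ℝ) ≤ 2 * s := by exact_mod_cast hcount.trans (by omega)
    push_cast [Nat.cast_sub (by omega : 1 ≤ p)] at this
    linarith
  ext i j
  have hi : d i = 0 := congrFun hd i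
  have hj : d j = 0 := congrFun hd j
  linarith [hdiff i j]

/-- Sufficiency direction of Proposition 2: if `s < (p−1)/2`, two symmetric matrices with
at most `s` nonzero strictly upper-triangular entries and equal variation matrices
`T(Ω) = ω1ᵀ + 1ωᵀ − 2Ω` must coincide. -/
theorem variation_matrix_identifiability (p : ℕ) (hp : 5 ≤ p) (s : ℕ)
    (hs : (s : ℝ) < ((p : ℝ) - 1) / 2)
    (Ω₁ Ω₂ : Matrix (Fin p) (Fin p) ℝ) (h1 : Ω₁.IsSymm) (h2 : Ω₂.IsSymm)
    (hs1 : {ij : Fin p × Fin p | ij.1 < ij.2 ∧ Ω₁ ij.1 ij.2 ≠ 0}.ncard ≤ s)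
    (hs2 : {ij : Fin p × Fin p | ij.1 < ij.2 ∧ Ω₂ ij.1 ij.2 ≠ 0}.ncard ≤ s)
    (hT : ∀ i j, Ω₁ i i + Ω₁ j j - 2 * Ω₁ i j = Ω₂ i i + Ω₂ j j - 2 * Ω₂ i j) :
    Ω₁ = Ω₂ :=
  variation_matrix_identifiability_general p hp s hs Ω₁ Ω₂ hs1 hs2 hT
end

section
/- Let p ≥ 5 and let s be a natural number with s ≥ (p − 1)/2. Then there exist symmetric positive definite p×p real matrices Ω₁ ≠ Ω₂, each having at most s nonzero entries in positions (i,j) with i < j, such that T(Ω₁) = T(Ω₂), where T(Ω) = ω1ᵀ + 1ωᵀ − 2Ω and ω ∈ ℝ^p is the diagonal vector of Ω. -/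
/-!
The variation map `T` kills every matrix `a 1ᵀ + 1 aᵀ`. Hence the arrowhead matrices
`p I + e₀ bᵀ + b e₀ᵀ` and `p I + e₀ (b + ½ 1)ᵀ + (b + ½ 1) e₀ᵀ` have the same variation matrix.
Take `b = -½` on the indices `≤ s` and `0` beyond. Then the first matrix has at most `s` nonzero
entries above the diagonal and the second at most `p - 1 - s ≤ s`. Both are positive definite, since by
Cauchy–Schwarz the arm `e₀ bᵀ + b e₀ᵀ` has quadratic form at most `2 |b| |x|² ≤ √p |x|² < p |x|²`.
-/

open Matrix

section variation

variable {n R : Type*} [CommRing R]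

def variationMatrix (Ω : Matrix n n R) : Matrix n n R :=
  of fun i j => Ω i i + Ω j j - 2 * Ω i j

theorem variationMatrix_add_vecMulVec_one (Ω : Matrix n n R) (a : n → R) :
    variationMatrix (Ω + vecMulVec a 1 + vecMulVec 1 a) = variationMatrix Ω := by
  ext i j
  simp only [variationMatrix, of_apply, Matrix.add_apply, vecMulVec_apply, Pi.one_apply]
  ring

end variation

theorem dotProduct_sq_le_dotProduct_self_mul {n : Type*} [Fintype n] (a x : n → ℝ) :
    (a ⬝ᵥ x) ^ 2 ≤ (a ⬝ᵥ a) * (x ⬝ᵥ x) := by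
  simpa only [dotProduct, ← sq] using Finset.sum_mul_sq_le_sq_mul_sq Finset.univ a x

theorem posDef_smul_one_add_vecMulVec_add_vecMulVec {n : Type*} [Fintype n] [DecidableEq n]
    {c : ℝ} (hc : 0 < c) {a b : n → ℝ} (hab : 4 * (a ⬝ᵥ a) * (b ⬝ᵥ b) < c ^ 2) :
    (c • 1 + vecMulVec a b + vecMulVec b a).PosDef := by
  refine posDef_iff_dotProduct_mulVec.mpr ⟨?_, fun x hx => ?_⟩
  · simp [IsHermitian, add_right_comm _ (vecMulVec a b)]
  have hxx : 0 < x ⬝ᵥ x := by simpa using dotProduct_star_self_pos_iff.mpr hx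
  have hform : star x ⬝ᵥ ((c • 1 + vecMulVec a b + vecMulVec b a) *ᵥ x)
      = c * (x ⬝ᵥ x) + 2 * ((a ⬝ᵥ x) * (b ⬝ᵥ x)) := by
    simp only [star_trivial, add_mulVec, smul_mulVec, one_mulVec, vecMulVec_mulVec,
      op_smul_eq_smul, dotProduct_comm x, add_dotProduct, smul_dotProduct, smul_eq_mul]
    ring
  have hq : ((a ⬝ᵥ x) * (b ⬝ᵥ x)) ^ 2 ≤ (a ⬝ᵥ a) * (b ⬝ᵥ b) * (x ⬝ᵥ x) ^ 2 := by
    have ha := dotProduct_sq_le_dotProduct_self_mul a x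
    have hb := dotProduct_sq_le_dotProduct_self_mul b x
    calc _ = (a ⬝ᵥ x) ^ 2 * (b ⬝ᵥ x) ^ 2 := mul_pow _ _ _
      _ ≤ ((a ⬝ᵥ a) * (x ⬝ᵥ x)) * ((b ⬝ᵥ b) * (x ⬝ᵥ x)) :=
        mul_le_mul ha hb (sq_nonneg _) (le_trans (sq_nonneg _) ha)
      _ = _ := by ring
  rw [hform]
  by_contra! hneg
  have hcx : 0 < c * (x ⬝ᵥ x) := mul_pos hc hxx
  nlinarith [mul_lt_mul_of_pos_right hab (pow_pos hxx 2)]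

section arrowhead

variable {n R : Type*} [DecidableEq n] [CommRing R]

def arrowhead (i₀ : n) (c : R) (b : n → R) : Matrix n n R :=
  c • 1 + vecMulVec (Pi.single i₀ 1) b + vecMulVec b (Pi.single i₀ 1)

theorem arrowhead_apply_self (i₀ : n) (c : R) (b : n → R) :
    arrowhead i₀ c b i₀ i₀ = c + 2 * b i₀ := by
  simp only [arrowhead, Matrix.add_apply, Matrix.smul_apply, one_apply_eq, smul_eq_mul, mul_one,
    vecMulVec_apply, Pi.single_eq_same, one_mul]
  ring

theorem arrowhead_apply_of_lt [LinearOrder n] [OrderBot n] (c : R) (b : n → R) {i j : n}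
    (hij : i < j) : arrowhead ⊥ c b i j = if i = ⊥ then b j else 0 := by
  have hj : j ≠ ⊥ := (bot_le.trans_lt hij).ne'
  by_cases hi : i = ⊥
  · subst hi
    simp [arrowhead, vecMulVec_apply, hij.ne, hj]
  · simp [arrowhead, vecMulVec_apply, hij.ne, hj, hi]

theorem ncard_upper_support_arrowhead_le [Finite n] [LinearOrder n] [OrderBot n] (c : R)
    (b : n → R) :
    {ij : n × n | ij.1 < ij.2 ∧ arrowhead ⊥ c b ij.1 ij.2 ≠ 0}.ncard ≤
      {j : n | ⊥ < j ∧ b j ≠ 0}.ncard := by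
  have hsub : {ij : n × n | ij.1 < ij.2 ∧ arrowhead ⊥ c b ij.1 ij.2 ≠ 0} ⊆
      (fun j => (⊥, j)) '' {j : n | ⊥ < j ∧ b j ≠ 0} := by
    rintro ⟨i, j⟩ ⟨hij, hne⟩
    rw [arrowhead_apply_of_lt c b hij] at hne
    split_ifs at hne with hi
    · subst hi
      exact ⟨j, ⟨hij, hne⟩, rfl⟩
    · exact absurd rfl hne
  calc _ ≤ ((fun j => (⊥, j)) '' {j : n | ⊥ < j ∧ b j ≠ 0}).ncard :=
        Set.ncard_le_ncard hsub (Set.toFinite _)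
    _ = _ := Set.ncard_image_of_injective _ (Prod.mk_right_injective ⊥)

theorem arrowhead_add_smul_one (i₀ : n) (c t : R) (b : n → R) :
    arrowhead i₀ c (b + t • 1) =
      arrowhead i₀ c b + vecMulVec (t • Pi.single i₀ 1) 1 + vecMulVec 1 (t • Pi.single i₀ 1) := by
  ext i j
  simp only [arrowhead, Matrix.add_apply, vecMulVec_apply, Pi.add_apply, Pi.smul_apply,
    Pi.one_apply, smul_eq_mul]
  ring

theorem variationMatrix_arrowhead_add_smul_one (i₀ : n) (c t : R) (b : n → R) :
    variationMatrix (arrowhead i₀ c (b + t • 1)) = variationMatrix (arrowhead i₀ c b) := by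
  rw [arrowhead_add_smul_one, variationMatrix_add_vecMulVec_one]

theorem arrowhead_posDef [Fintype n] {c r : ℝ} (i₀ : n) (b : n → ℝ) (hc : 0 < c)
    (hb : ∀ j, |b j| ≤ r) (hcr : 4 * Fintype.card n * r ^ 2 < c ^ 2) :
    (arrowhead i₀ c b).PosDef := by
  have hbb : b ⬝ᵥ b ≤ Fintype.card n * r ^ 2 :=
    calc b ⬝ᵥ b = ∑ j, |b j| ^ 2 := by simp [dotProduct, sq]
      _ ≤ ∑ _j : n, r ^ 2 := Finset.sum_le_sum fun j _ => pow_le_pow_left₀ (abs_nonneg _) (hb j) 2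
      _ = Fintype.card n * r ^ 2 := by simp
  refine posDef_smul_one_add_vecMulVec_add_vecMulVec hc (lt_of_le_of_lt ?_ hcr)
  simp only [single_dotProduct, Pi.single_eq_same, one_mul]
  linarith

end arrowhead

theorem Fin.ncard_le_card_of_val_mem {p : ℕ} {A : Set (Fin p)} {t : Finset ℕ}
    (h : ∀ j ∈ A, (j : ℕ) ∈ t) : A.ncard ≤ t.card := by
  simpa using Set.ncard_le_ncard_of_injOn Fin.val h Fin.val_injective.injOn t.finite_toSet

section stepVector

variable (p s : ℕ) [NeZero p]

noncomputable def stepVector (j : Fin p) : ℝ := if (j : ℕ) ≤ s then -1 / 2 else 0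

theorem ncard_support_stepVector_le : {j : Fin p | ⊥ < j ∧ stepVector p s j ≠ 0}.ncard ≤ s := by
  refine (Fin.ncard_le_card_of_val_mem (t := Finset.Ioc 0 s) ?_).trans (by simp)
  rintro j ⟨hj0, hj⟩
  simp only [stepVector, ne_eq, ite_eq_right_iff, Classical.not_imp] at hj
  simp only [Finset.mem_Ioc]
  rw [bot_eq_zero, Fin.lt_def, Fin.val_zero] at hj0
  exact ⟨hj0, hj.1⟩

theorem ncard_support_stepVector_add_half_le :
    {j : Fin p | ⊥ < j ∧ (stepVector p s + (1 / 2 : ℝ) • 1) j ≠ 0}.ncard ≤ p - 1 - s := by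
  refine (Fin.ncard_le_card_of_val_mem (t := Finset.Ioo s p) ?_).trans (by simp; omega)
  rintro j ⟨-, hj⟩
  simp only [stepVector, Pi.add_apply, Pi.smul_apply, Pi.one_apply] at hj
  simp only [Finset.mem_Ioo]
  refine ⟨not_le.mp fun hjs => hj ?_, j.isLt⟩
  norm_num [hjs]

end stepVector

/-- Necessity direction of Proposition 2: if `s ≥ (p−1)/2`, there exist two distinct
symmetric positive definite matrices with at most `s` nonzero strictly upper-triangular
entries having the same variation matrix `T(Ω) = ω1ᵀ + 1ωᵀ − 2Ω`. -/
theorem variation_matrix_nonidentifiability (p : ℕ) (hp : 5 ≤ p) (s : ℕ)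
    (hs : ((p : ℝ) - 1) / 2 ≤ s) :
    ∃ Ω₁ Ω₂ : Matrix (Fin p) (Fin p) ℝ, Ω₁.PosDef ∧ Ω₂.PosDef ∧
      {ij : Fin p × Fin p | ij.1 < ij.2 ∧ Ω₁ ij.1 ij.2 ≠ 0}.ncard ≤ s ∧
      {ij : Fin p × Fin p | ij.1 < ij.2 ∧ Ω₂ ij.1 ij.2 ≠ 0}.ncard ≤ s ∧
      Ω₁ ≠ Ω₂ ∧
      ∀ i j, Ω₁ i i + Ω₁ j j - 2 * Ω₁ i j = Ω₂ i i + Ω₂ j j - 2 * Ω₂ i j := by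
  have : NeZero p := ⟨by omega⟩
  have hps : p ≤ 2 * s + 1 := by exact_mod_cast (by linarith : (p : ℝ) ≤ 2 * s + 1)
  have hposDef (b : Fin p → ℝ) (hb : ∀ j, |b j| ≤ 1 / 2) : (arrowhead ⊥ (p : ℝ) b).PosDef :=
    arrowhead_posDef ⊥ b (by positivity) hb (by
      have : (5 : ℝ) ≤ p := by exact_mod_cast hp
      rw [Fintype.card_fin]
      nlinarith)
  refine ⟨arrowhead ⊥ p (stepVector p s), arrowhead ⊥ p (stepVector p s + (1 / 2 : ℝ) • 1),
    hposDef _ fun j => ?_, hposDef _ fun j => ?_, ?_, ?_, ?_, fun i j => ?_⟩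
  · unfold stepVector; split_ifs <;> norm_num
  · simp only [stepVector, Pi.add_apply, Pi.smul_apply, Pi.one_apply]; split_ifs <;> norm_num
  · exact (ncard_upper_support_arrowhead_le _ _).trans (ncard_support_stepVector_le p s)
  · exact (ncard_upper_support_arrowhead_le _ _).trans
      ((ncard_support_stepVector_add_half_le p s).trans (by omega))
  · intro h
    have h00 := congrFun (congrFun h ⊥) ⊥
    simp [arrowhead_apply_self, stepVector, bot_eq_zero] at h00
  · exact congrFun (congrFun (variationMatrix_arrowhead_add_smul_one ⊥ _ _ _).symm i) j
end

section
/- Let S : ℝ → ℝ → ℝ, written (λ, z) ↦ S_λ(z), be a thresholding function family, i.e., (i) S_λ(z) = 0 whenever |z| ≤ λ, and (ii) |S_λ(z) − z| ≤ λ for all z ∈ ℝ and λ > 0. Let p ≥ 1, 0 ≤ q < 1, let ω_1, …, ω_p ∈ ℝ, and let λ_1, …, λ_p > 0. Then Σ_{j=1}^p |S_{λ_j}(ω_j) − ω_j| ≤ Σ_{j=1}^p |ω_j|^q λ_j^{1−q}. -/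
/-- Bias bound for a general thresholding function family: if `S_λ(z) = 0` for `|z| ≤ λ`
and `|S_λ(z) − z| ≤ λ`, then `Σ_j |S_{λ_j}(ω_j) − ω_j| ≤ Σ_j |ω_j|^q λ_j^(1−q)`. -/
theorem thresholding_bias_bound (S : ℝ → ℝ → ℝ)
    (hS1 : ∀ lam : ℝ, 0 < lam → ∀ z : ℝ, |z| ≤ lam → S lam z = 0)
    (hS2 : ∀ lam : ℝ, 0 < lam → ∀ z : ℝ, |S lam z - z| ≤ lam)
    (p : ℕ) (hp : 1 ≤ p) (q : ℝ) (hq0 : 0 ≤ q) (hq1 : q < 1)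
    (ω lam : Fin p → ℝ) (hlam : ∀ j, 0 < lam j) :
    ∑ j, |S (lam j) (ω j) - ω j| ≤ ∑ j, |ω j| ^ q * lam j ^ (1 - q) := by
  apply Finset.sum_le_sum
  intro j _
  have hl := hlam j
  by_cases h : |ω j| ≤ lam j
  · rw [hS1 _ hl _ h]
    simp only [zero_sub, abs_neg, abs_abs]
    rcases eq_or_ne (ω j) 0 with h0 | h0
    · rw [h0]
      simp only [abs_zero]
      positivity
    · have hpos : 0 < |ω j| := abs_pos.mpr h0
      calc |ω j| = |ω j| ^ q * |ω j| ^ (1 - q) := by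
            rw [← Real.rpow_add hpos]; norm_num
        _ ≤ |ω j| ^ q * lam j ^ (1 - q) := by
            apply mul_le_mul_of_nonneg_left
            · exact Real.rpow_le_rpow hpos.le h (by linarith)
            · positivity
  · push_neg at h
    calc |S (lam j) (ω j) - ω j| ≤ lam j := hS2 _ hl _
      _ = lam j ^ q * lam j ^ (1 - q) := by rw [← Real.rpow_add hl]; norm_num
      _ ≤ |ω j| ^ q * lam j ^ (1 - q) := by
          apply mul_le_mul_of_nonneg_right
          · exact Real.rpow_le_rpow hl.le h.le hq0
          · positivity
end

section
/- Let S : ℝ → ℝ → ℝ, written (λ, z) ↦ S_λ(z), be a thresholding function family, i.e., (i) S_λ(z) = 0 whenever |z| ≤ λ, and (ii) |S_λ(z) − z| ≤ λ for all z ∈ ℝ and λ > 0. Let p ≥ 1, 0 ≤ q < 1, let ω_1, …, ω_p ∈ ℝ, let λ_1, …, λ_p > 0, and let γ̂_1, …, γ̂_p ∈ ℝ satisfy |γ̂_j − ω_j| ≤ λ_j/2 for every j. Then Σ_{j=1}^p |S_{λ_j}(γ̂_j) − ω_j| ≤ (21/2) Σ_{j=1}^p |ω_j|^q λ_j^{1−q}.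 -/
lemma thresh_term (S : ℝ → ℝ → ℝ)
    (hS1 : ∀ lam : ℝ, 0 < lam → ∀ z : ℝ, |z| ≤ lam → S lam z = 0)
    (hS2 : ∀ lam : ℝ, 0 < lam → ∀ z : ℝ, |S lam z - z| ≤ lam)
    (q : ℝ) (hq0 : 0 ≤ q) (hq1 : q < 1)
    (w l g : ℝ) (hl : 0 < l) (hc : |g - w| ≤ l / 2) :
    |S l g - w| ≤ 21 / 2 * (|w| ^ q * l ^ (1 - q)) := by
  have hlq : (0:ℝ) ≤ l ^ (1 - q) := Real.rpow_nonneg hl.le _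
  have hwq : (0:ℝ) ≤ |w| ^ q := Real.rpow_nonneg (abs_nonneg w) _
  by_cases hg : |g| ≤ l
  · rw [hS1 l hl g hg, zero_sub, abs_neg]
    by_cases hw : w = 0
    · simp [hw]; positivity
    · have hwpos : 0 < |w| := abs_pos.mpr hw
      have hwle : |w| ≤ 3 / 2 * l := by
        have := abs_sub_abs_le_abs_sub w g
        rw [abs_sub_comm] at this
        linarith
      calc |w| = |w| ^ q * |w| ^ (1 - q) := by
              rw [← Real.rpow_add hwpos]; simp
        _ ≤ |w| ^ q * (3 / 2 * l) ^ (1 - q) := by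
              apply mul_le_mul_of_nonneg_left _ hwq
              exact Real.rpow_le_rpow (abs_nonneg w) hwle (by linarith)
        _ = |w| ^ q * ((3 / 2) ^ (1 - q) * l ^ (1 - q)) := by
              rw [Real.mul_rpow (by norm_num) hl.le]
        _ ≤ 21 / 2 * (|w| ^ q * l ^ (1 - q)) := by
              have h32 : (3 / 2 : ℝ) ^ (1 - q) ≤ 3 / 2 := by
                calc (3 / 2 : ℝ) ^ (1 - q) ≤ (3/2:ℝ) ^ (1:ℝ) :=
                      Real.rpow_le_rpow_of_exponent_le (by norm_num) (by linarith)
                  _ = 3 / 2 := by norm_num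
              nlinarith [mul_nonneg hwq hlq]
  · push_neg at hg
    have h1 : |S l g - w| ≤ 3 / 2 * l := by
      have := hS2 l hl g
      have h2 := abs_sub_le (S l g) g w
      linarith
    have hwbig : l / 2 < |w| := by
      have := abs_sub_abs_le_abs_sub g w
      linarith
    have hwpos : 0 < |w| := lt_trans (by linarith) hwbig
    have hlle : l ≤ 2 * |w| := by linarith
    calc |S l g - w| ≤ 3 / 2 * l := h1
      _ = 3 / 2 * (l ^ q * l ^ (1 - q)) := by rw [← Real.rpow_add hl]; simp
      _ ≤ 3 / 2 * ((2 * |w|) ^ q * l ^ (1 - q)) := by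
            apply mul_le_mul_of_nonneg_left _ (by norm_num)
            exact mul_le_mul_of_nonneg_right
              (Real.rpow_le_rpow hl.le hlle hq0) hlq
      _ = 3 / 2 * ((2:ℝ) ^ q * (|w| ^ q * l ^ (1 - q))) := by
            rw [Real.mul_rpow (by norm_num) (abs_nonneg w)]; ring
      _ ≤ 21 / 2 * (|w| ^ q * l ^ (1 - q)) := by
            have h2q : (2:ℝ) ^ q ≤ 2 := by
              calc (2:ℝ) ^ q ≤ (2:ℝ) ^ (1:ℝ) :=
                    Real.rpow_le_rpow_of_exponent_le (by norm_num) (by linarith)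
                _ = 2 := by norm_num
            nlinarith [mul_nonneg hwq hlq]

/-- Deterministic row-wise oracle inequality at the core of Theorem 1: if
`|γ̂_j − ω_j| ≤ λ_j/2` for all `j`, then
`Σ_j |S_{λ_j}(γ̂_j) − ω_j| ≤ (21/2) Σ_j |ω_j|^q λ_j^{1−q}`. -/
theorem thresholding_oracle_inequality (S : ℝ → ℝ → ℝ)
    (hS1 : ∀ lam : ℝ, 0 < lam → ∀ z : ℝ, |z| ≤ lam → S lam z = 0)
    (hS2 : ∀ lam : ℝ, 0 < lam → ∀ z : ℝ, |S lam z - z| ≤ lam)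
    (p : ℕ) (hp : 1 ≤ p) (q : ℝ) (hq0 : 0 ≤ q) (hq1 : q < 1)
    (ω lam γhat : Fin p → ℝ) (hlam : ∀ j, 0 < lam j)
    (hclose : ∀ j, |γhat j - ω j| ≤ lam j / 2) :
    ∑ j, |S (lam j) (γhat j) - ω j| ≤ 21 / 2 * ∑ j, |ω j| ^ q * lam j ^ (1 - q) := by
  rw [Finset.mul_sum]
  exact Finset.sum_le_sum fun j _ =>
    thresh_term S hS1 hS2 q hq0 hq1 _ _ _ (hlam j) (hclose j)
end

section
/- Let S : ℝ → ℝ → ℝ, written (λ, z) ↦ S_λ(z), be a thresholding function family, i.e., (i) S_λ(z) = 0 whenever |z| ≤ λ, and (ii) |S_λ(z) − z| ≤ λ for all z ∈ ℝ and λ > 0. Let λ > 0, ω ∈ ℝ, γ̂ ∈ ℝ, and c ≥ 0 satisfy |γ̂ − ω| ≤ c and λ + c < |ω|. Then S_λ(γ̂) ≠ 0 and sgn(S_λ(γ̂)) = sgn(ω). -/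
/-- Deterministic sign-consistency step underlying Theorem 2: if `|γ̂ − ω| ≤ c` and
`λ + c < |ω|`, then `S_λ(γ̂) ≠ 0` and `sgn(S_λ(γ̂)) = sgn(ω)`. -/
theorem thresholding_sign_consistency (S : ℝ → ℝ → ℝ)
    (hS1 : ∀ lam : ℝ, 0 < lam → ∀ z : ℝ, |z| ≤ lam → S lam z = 0)
    (hS2 : ∀ lam : ℝ, 0 < lam → ∀ z : ℝ, |S lam z - z| ≤ lam)
    (lam : ℝ) (hlam : 0 < lam) (ω γhat c : ℝ) (hc : 0 ≤ c)
    (hclose : |γhat - ω| ≤ c) (hsig : lam + c < |ω|) :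
    S lam γhat ≠ 0 ∧ Real.sign (S lam γhat) = Real.sign ω := by
  have h2 := hS2 lam hlam γhat
  have habs := abs_le.1 h2
  have hcl := abs_le.1 hclose
  rcases lt_or_ge ω 0 with hω | hω
  · have hωlt : ω < -(lam + c) := by
      rw [abs_of_neg hω] at hsig; linarith
    have hSneg : S lam γhat < 0 := by linarith [habs.2, hcl.2]
    refine ⟨ne_of_lt hSneg, ?_⟩
    rw [Real.sign_of_neg hSneg, Real.sign_of_neg hω]
  · have hω0 : 0 < ω := by
      rcases hω.eq_or_lt with h | h
      · exfalso; rw [← h, abs_zero] at hsig; linarith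
      · exact h
    have hωgt : lam + c < ω := by rwa [abs_of_pos hω0] at hsig
    have hSpos : 0 < S lam γhat := by linarith [habs.1, hcl.1]
    exact ⟨ne_of_gt hSpos, by rw [Real.sign_of_pos hSpos, Real.sign_of_pos hω0]⟩
end
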